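/- For 0 < q < 1, α > −1, β > −1, μ > 0, x ∈ (0,1], the left-sided q-fractional integral of t ↦ t^α p_n(t; q^α, q^β | q) equals (Γ_q(α+1)/Γ_q(μ+α+1)) x^{α+μ} p_n(x; q^{α+μ}, q^{β−μ} | q), where p_n is the little q-Jacobi polynomial. -/

import Mathlib

open Filter

noncomputable section

namespace QFrac

variable (q : ℝ)

/-- infinite q-shifted factorial `(z;q)_∞` -/
def pochInf (z : ℝ) : ℝ := ∏' n : ℕ, (1 - z * q ^ n)

/-- generalized q-shifted factorial `(z;q)_ν = (z;q)_∞ / (z q^ν;q)_∞` -/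
def poch (z ν : ℝ) : ℝ := pochInf q z / pochInf q (z * q ^ ν)

/-- finite q-shifted factorial `(z;q)_k` -/
def pochN (z : ℝ) (k : ℕ) : ℝ := ∏ i ∈ Finset.range k, (1 - z * q ^ i)

/-- q-Gamma function -/
def qGamma (α : ℝ) : ℝ := pochInf q q / pochInf q (q ^ α) * (1 - q) ^ (1 - α)

/-- Jackson q-integral `∫_0^a f(t) d_q t` -/
def jackson (a : ℝ) (f : ℝ → ℝ) : ℝ := (1 - q) * a * ∑' n : ℕ, q ^ n * f (a * q ^ n)

/-- Jackson q-integral `∫_c^b f(t) d_q t` -/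
def jacksonI (c b : ℝ) (f : ℝ → ℝ) : ℝ := jackson q b f - jackson q c f

/-- left-sided Riemann–Liouville q-fractional integral `I^α_{q,0^+}` -/
def Ileft (α : ℝ) (f : ℝ → ℝ) (x : ℝ) : ℝ :=
  x ^ (α - 1) / qGamma q α * jackson q x (fun t => poch q (q * t / x) (α - 1) * f t)

/-- right-sided Riemann–Liouville q-fractional integral `I^α_{q,b^-}` -/
def Iright (b α : ℝ) (f : ℝ → ℝ) (x : ℝ) : ℝ :=
  (qGamma q α)⁻¹ *
    jacksonI q (q * x) b (fun t => t ^ (α - 1) * poch q (q * x / t) (α - 1) * f t)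

/-- Jackson q-derivative -/
def Dq (f : ℝ → ℝ) (x : ℝ) : ℝ := (f x - f (q * x)) / ((1 - q) * x)

/-- Jackson `q⁻¹`-derivative -/
def Dqinv (f : ℝ → ℝ) (x : ℝ) : ℝ := (f x - f (x / q)) / ((1 - q⁻¹) * x)

/-- left-sided Caputo q-fractional derivative of order `α ∈ (0,1)` -/
def CDleft (α : ℝ) (f : ℝ → ℝ) : ℝ → ℝ := Ileft q (1 - α) (Dq q f)

/-- left-sided Riemann–Liouville q-fractional derivative of order `α ∈ (0,1)` -/
def DRLleft (α : ℝ) (f : ℝ → ℝ) : ℝ → ℝ := Dq q (Ileft q (1 - α) f)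

/-- right-sided Riemann–Liouville q-fractional derivative of order `α ∈ (0,1)` -/
def DRLright (b α : ℝ) (f : ℝ → ℝ) (x : ℝ) : ℝ :=
  (-1 / q) * Dqinv q (fun t => Iright q b (1 - α) f t) x

/-- right-sided Caputo q-fractional derivative of order `α ∈ (0,1)` -/
def CDright (b α : ℝ) (f : ℝ → ℝ) (x : ℝ) : ℝ :=
  (-1 / q) * Iright q b (1 - α) (Dqinv q f) x

/-- `f ∈ L¹_q(A^*_{q,a})` -/
def MemL1 (a : ℝ) (f : ℝ → ℝ) : Prop := Summable (fun n : ℕ => q ^ n * |f (a * q ^ n)|)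

/-- `f ∈ L²_q(A^*_{q,a})` -/
def MemL2 (a : ℝ) (f : ℝ → ℝ) : Prop := Summable (fun n : ℕ => q ^ n * (f (a * q ^ n)) ^ 2)

/-- the `L²_q` norm -/
def norm2 (a : ℝ) (f : ℝ → ℝ) : ℝ := Real.sqrt (jackson q a (fun t => (f t) ^ 2))

/-- `f` is q-regular at zero (its value at `0` is the limit along the q-grid) -/
def qRegular (a : ℝ) (f : ℝ → ℝ) : Prop :=
  Tendsto (fun n : ℕ => f (a * q ^ n)) atTop (nhds (f 0))

/-- the limit at zero along the q-grid exists -/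
def qRegular' (a : ℝ) (f : ℝ → ℝ) : Prop :=
  ∃ L : ℝ, Tendsto (fun n : ℕ => f (a * q ^ n)) atTop (nhds L)

/-- sup norm on `A^*_{q,a}` -/
def supNorm (a : ℝ) (f : ℝ → ℝ) : ℝ := max (⨆ n : ℕ, |f (a * q ^ n)|) |f 0|

/-- bounded q-variation part of q-absolute continuity -/
def qACvar (a : ℝ) (f : ℝ → ℝ) : Prop :=
  ∃ K : ℝ, ∀ m N : ℕ,
    ∑ j ∈ Finset.range N, |f (a * q ^ (m + j)) - f (a * q ^ (m + j + 1))| ≤ K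

/-- q-absolute continuity on `A^*_{q,a}` -/
def qAC (a : ℝ) (f : ℝ → ℝ) : Prop := qRegular q a f ∧ qACvar q a f

/-- little q-Jacobi polynomial `p_n(x; q^A, q^B | q)` -/
def littleJacobi (n : ℕ) (A B x : ℝ) : ℝ :=
  ∑ k ∈ Finset.range (n + 1),
    pochN q (q ^ (-(n : ℝ))) k * pochN q (q ^ (A + B + (n : ℝ) + 1)) k /
      (pochN q (q ^ (A + 1)) k * pochN q q k) * (q * x) ^ k

end QFrac

/-! For a power `t ^ s` with `s > -1`, the Jackson sum defining `I^μ_{q,0+}` runs over the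
lattice `x q^m`, where the kernel is
`(q^{m+1}; q)_{μ-1} = (q;q)_∞ / (q^μ;q)_∞ · (q^μ;q)_m / (q;q)_m`.
The sum is therefore a q-binomial series `∑ (q^μ;q)_m / (q;q)_m · q^{m(s+1)}
= (q^{μ+s+1};q)_∞ / (q^{s+1};q)_∞`, which yields the q-Beta evaluation
`I^μ t^s = Γ_q(s+1) / Γ_q(s+μ+1) · x^{s+μ}`. Expanding `t^α p_n(t)` into the monomials
`t^{α+k}` and using `Γ_q(s+k) = (q^s;q)_k (1-q)^{-k} Γ_q(s)` turns the coefficient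
`1 / (q^{α+1};q)_k` of `p_n(·; q^α, q^β)` into `1 / (q^{α+μ+1};q)_k`, that of
`p_n(·; q^{α+μ}, q^{β-μ})`, because `α + β` is unchanged.

The q-binomial theorem itself follows by iterating `(1 - w) F(w) = (1 - a w) F(q w)` to
`(w;q)_N F(w) = (a w;q)_N F(w q^N)` and letting `N → ∞`. -/

open Topology

namespace QFrac

variable {q : ℝ}

lemma one_sub_mul_pow_pos (hq0 : 0 ≤ q) (hq1 : q < 1) {z : ℝ} (hz : z < 1) (n : ℕ) :
    0 < 1 - z * q ^ n := by
  have h0 := pow_nonneg hq0 n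
  have h1 : q ^ n ≤ 1 := pow_le_one₀ hq0 hq1.le
  rcases le_or_gt z 0 with h | h <;> nlinarith

lemma hasProd_pochInf (hq0 : 0 ≤ q) (hq1 : q < 1) (z : ℝ) :
    HasProd (fun n : ℕ => 1 - z * q ^ n) (pochInf q z) := by
  have hsum : Summable fun n : ℕ => -(z * q ^ n) :=
    ((summable_geometric_of_lt_one hq0 hq1).mul_left z).neg
  simpa only [pochInf, sub_eq_add_neg] using (Real.multipliable_one_add_of_summable hsum).hasProd

lemma pochInf_pos (hq0 : 0 ≤ q) (hq1 : q < 1) {z : ℝ} (hz : z < 1) : 0 < pochInf q z := by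
  have hlog : Summable fun n : ℕ => Real.log (1 - z * q ^ n) := by
    have hsum : Summable fun n : ℕ => -(z * q ^ n) :=
      ((summable_geometric_of_lt_one hq0 hq1).mul_left z).neg
    simpa only [sub_eq_add_neg] using Real.summable_log_one_add_of_summable hsum
  rw [pochInf, ← Real.rexp_tsum_eq_tprod (one_sub_mul_pow_pos hq0 hq1 hz) hlog]
  exact Real.exp_pos _

lemma pochN_pos (hq0 : 0 ≤ q) (hq1 : q < 1) {z : ℝ} (hz : z < 1) (k : ℕ) : 0 < pochN q z k :=
  Finset.prod_pos fun i _ => one_sub_mul_pow_pos hq0 hq1 hz i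

lemma pochN_le_one (hq0 : 0 ≤ q) (hq1 : q < 1) {z : ℝ} (hz0 : 0 ≤ z) (hz1 : z ≤ 1) (k : ℕ) :
    pochN q z k ≤ 1 := by
  refine Finset.prod_le_one (fun i _ => ?_) (fun i _ => ?_)
  · nlinarith [pow_le_one₀ hq0 hq1.le (n := i), pow_nonneg hq0 i]
  · nlinarith [pow_nonneg hq0 i]

lemma pochN_mul_pochInf (hq0 : 0 ≤ q) (hq1 : q < 1) (z : ℝ) (k : ℕ) :
    pochN q z k * pochInf q (z * q ^ k) = pochInf q z := by
  have h := hasProd_pochInf hq0 hq1 (z * q ^ k)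
  simp only [mul_assoc, ← pow_add, add_comm k] at h
  exact h.prod_range_mul.unique (hasProd_pochInf hq0 hq1 z)

lemma pochInf_le_pochN (hq0 : 0 ≤ q) (hq1 : q < 1) {z : ℝ} (hz0 : 0 ≤ z) (hz1 : z < 1) (k : ℕ) :
    pochInf q z ≤ pochN q z k := by
  refine Antitone.le_of_tendsto (f := pochN q z) (fun i j hij => ?_)
    (hasProd_pochInf hq0 hq1 z).tendsto_prod_nat k
  obtain ⟨d, rfl⟩ := Nat.exists_eq_add_of_le hij
  rw [pochN, pochN, Finset.prod_range_add]
  have hzi : z * q ^ i ≤ 1 := by nlinarith [pow_le_one₀ hq0 hq1.le (n := i), pow_nonneg hq0 i]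
  have htail := pochN_le_one hq0 hq1 (mul_nonneg hz0 (pow_nonneg hq0 i)) hzi d
  simp only [pochN, mul_assoc, ← pow_add] at htail
  exact mul_le_of_le_one_right (pochN_pos hq0 hq1 hz1 i).le htail

def qBinomSeries (q a w : ℝ) : ℝ := ∑' m : ℕ, pochN q a m / pochN q q m * w ^ m

lemma abs_qBinomCoeff_le (hq0 : 0 ≤ q) (hq1 : q < 1) {a : ℝ} (ha0 : 0 ≤ a) (ha1 : a < 1)
    (m : ℕ) : |pochN q a m / pochN q q m| ≤ (pochInf q q)⁻¹ := by
  rw [abs_of_pos (div_pos (pochN_pos hq0 hq1 ha1 m) (pochN_pos hq0 hq1 hq1 m)), ← one_div]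
  exact div_le_div₀ zero_le_one (pochN_le_one hq0 hq1 ha0 ha1.le m) (pochInf_pos hq0 hq1 hq1)
    (pochInf_le_pochN hq0 hq1 hq0 hq1 m)

lemma summable_qBinomSeries (hq0 : 0 ≤ q) (hq1 : q < 1) {a w : ℝ} (ha0 : 0 ≤ a) (ha1 : a < 1)
    (hw : |w| < 1) : Summable fun m : ℕ => pochN q a m / pochN q q m * w ^ m := by
  refine .of_norm_bounded ((summable_geometric_of_lt_one (abs_nonneg w) hw).mul_left
    (pochInf q q)⁻¹) fun m => ?_
  rw [norm_mul, norm_pow, Real.norm_eq_abs, Real.norm_eq_abs]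
  exact mul_le_mul_of_nonneg_right (abs_qBinomCoeff_le hq0 hq1 ha0 ha1 m) (by positivity)

lemma qBinomCoeff_succ (hq0 : 0 ≤ q) (hq1 : q < 1) (a : ℝ) (m : ℕ) :
    pochN q a (m + 1) / pochN q q (m + 1) * (1 - q ^ (m + 1)) =
      pochN q a m / pochN q q m * (1 - a * q ^ m) := by
  have hm := (pochN_pos hq0 hq1 hq1 m).ne'
  have hm1 : 1 - q ^ m * q ≠ 0 := by
    rw [mul_comm]; exact (one_sub_mul_pow_pos hq0 hq1 hq1 m).ne'
  rw [pochN, pochN, Finset.prod_range_succ, Finset.prod_range_succ, ← pochN, ← pochN, pow_succ]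
  field_simp

lemma abs_mul_pow_le (hq0 : 0 ≤ q) (hq1 : q < 1) (w : ℝ) (N : ℕ) : |w * q ^ N| ≤ |w| := by
  rw [abs_mul, abs_of_nonneg (pow_nonneg hq0 N)]
  exact mul_le_of_le_one_right (abs_nonneg w) (pow_le_one₀ hq0 hq1.le)

lemma one_sub_mul_qBinomSeries (hq0 : 0 ≤ q) (hq1 : q < 1) {a w : ℝ} (ha0 : 0 ≤ a)
    (ha1 : a < 1) (hw : |w| < 1) :
    (1 - w) * qBinomSeries q a w = (1 - a * w) * qBinomSeries q a (w * q) := by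
  set c : ℕ → ℝ := fun m => pochN q a m / pochN q q m
  have S := summable_qBinomSeries hq0 hq1 ha0 ha1 hw
  have S' := summable_qBinomSeries hq0 hq1 ha0 ha1
    (by simpa only [pow_one] using (abs_mul_pow_le hq0 hq1 w 1).trans_lt hw)
  have hdiff : Summable fun m => c m * (1 - q ^ m) * w ^ m :=
    (S.sub S').congr fun m => by simp only [c, mul_pow]; ring
  have key : qBinomSeries q a w - qBinomSeries q a (w * q) =
      w * qBinomSeries q a w - a * w * qBinomSeries q a (w * q) :=
    calc qBinomSeries q a w - qBinomSeries q a (w * q)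
        = ∑' m, c m * (1 - q ^ m) * w ^ m := by
          rw [qBinomSeries, qBinomSeries, ← S.tsum_sub S']
          exact tsum_congr fun m => by simp only [c, mul_pow]; ring
      _ = ∑' m, c (m + 1) * (1 - q ^ (m + 1)) * w ^ (m + 1) := by
          rw [hdiff.tsum_eq_zero_add]; simp
      _ = ∑' m, (w * (c m * w ^ m) - a * w * (c m * (w * q) ^ m)) := by
          refine tsum_congr fun m => ?_
          rw [qBinomCoeff_succ hq0 hq1 a m, mul_pow]
          ring
      _ = w * qBinomSeries q a w - a * w * qBinomSeries q a (w * q) := by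
          rw [(S.mul_left w).tsum_sub (S'.mul_left (a * w)), tsum_mul_left, tsum_mul_left]
          rfl
  linear_combination key

lemma pochN_mul_qBinomSeries (hq0 : 0 ≤ q) (hq1 : q < 1) {a w : ℝ} (ha0 : 0 ≤ a)
    (ha1 : a < 1) (hw : |w| < 1) (N : ℕ) :
    pochN q w N * qBinomSeries q a w = pochN q (a * w) N * qBinomSeries q a (w * q ^ N) := by
  induction N with
  | zero => simp [pochN]
  | succ N ih =>
    have hstep := one_sub_mul_qBinomSeries hq0 hq1 ha0 ha1
      ((abs_mul_pow_le hq0 hq1 w N).trans_lt hw)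
    simp only [pochN, Finset.prod_range_succ] at ih ⊢
    rw [pow_succ, ← mul_assoc]
    linear_combination (1 - w * q ^ N) * ih + (∏ i ∈ Finset.range N, (1 - a * w * q ^ i)) * hstep

lemma tendsto_qBinomSeries_mul_pow (hq0 : 0 ≤ q) (hq1 : q < 1) {a w : ℝ} (ha0 : 0 ≤ a)
    (ha1 : a < 1) (hw : |w| < 1) :
    Tendsto (fun N : ℕ => qBinomSeries q a (w * q ^ N)) atTop (𝓝 1) := by
  have hlim : Tendsto (fun N : ℕ => w * q ^ N) atTop (𝓝 0) := by
    simpa using (tendsto_pow_atTop_nhds_zero_of_lt_one hq0 hq1).const_mul w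
  have h := tendsto_tsum_of_dominated_convergence
    (f := fun N m => pochN q a m / pochN q q m * (w * q ^ N) ^ m)
    (bound := fun m => (pochInf q q)⁻¹ * |w| ^ m)
    ((summable_geometric_of_lt_one (abs_nonneg w) hw).mul_left _)
    (fun m => (hlim.pow m).const_mul _) (Eventually.of_forall fun N m => ?_)
  · rw [tsum_eq_single 0 fun m hm => by simp [hm]] at h
    simpa [pochN, qBinomSeries] using h
  · rw [norm_mul, norm_pow, Real.norm_eq_abs, Real.norm_eq_abs]
    exact mul_le_mul (abs_qBinomCoeff_le hq0 hq1 ha0 ha1 m)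
      (pow_le_pow_left₀ (abs_nonneg _) (abs_mul_pow_le hq0 hq1 w N) m) (by positivity)
      (inv_pos.2 (pochInf_pos hq0 hq1 hq1)).le

theorem hasSum_qBinomial (hq0 : 0 ≤ q) (hq1 : q < 1) {a w : ℝ} (ha0 : 0 ≤ a) (ha1 : a < 1)
    (hw : |w| < 1) :
    HasSum (fun m : ℕ => pochN q a m / pochN q q m * w ^ m) (pochInf q (a * w) / pochInf q w) := by
  have hw1 : w < 1 := (le_abs_self w).trans_lt hw
  convert (summable_qBinomSeries hq0 hq1 ha0 ha1 hw).hasSum using 1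
  rw [div_eq_iff (pochInf_pos hq0 hq1 hw1).ne', ← qBinomSeries]
  have hlhs : Tendsto (fun N => pochN q (a * w) N * qBinomSeries q a (w * q ^ N)) atTop
      (𝓝 (pochInf q (a * w) * 1)) :=
    (hasProd_pochInf hq0 hq1 (a * w)).tendsto_prod_nat.mul
      (tendsto_qBinomSeries_mul_pow hq0 hq1 ha0 ha1 hw)
  have hrhs : Tendsto (fun N => pochN q w N * qBinomSeries q a w) atTop
      (𝓝 (pochInf q w * qBinomSeries q a w)) :=
    (hasProd_pochInf hq0 hq1 w).tendsto_prod_nat.mul_const _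
  simp only [pochN_mul_qBinomSeries hq0 hq1 ha0 ha1 hw] at hrhs
  rw [mul_one] at hlhs
  exact (tendsto_nhds_unique hlhs hrhs).trans (mul_comm _ _)

lemma qGamma_pos (hq : 0 < q) (hq1 : q < 1) {s : ℝ} (hs : 0 < s) : 0 < qGamma q s :=
  mul_pos (div_pos (pochInf_pos hq.le hq1 hq1)
    (pochInf_pos hq.le hq1 (Real.rpow_lt_one hq.le hq1 hs)))
    (Real.rpow_pos_of_pos (by linarith) _)

lemma qGamma_add_nat (hq : 0 < q) (hq1 : q < 1) {s : ℝ} (hs : 0 < s) (k : ℕ) :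
    qGamma q (s + k) = pochN q (q ^ s) k / (1 - q) ^ k * qGamma q s := by
  have hqs : q ^ s < 1 := Real.rpow_lt_one hq.le hq1 hs
  have hsplit := pochN_mul_pochInf hq.le hq1 (q ^ s) k
  rw [← Real.rpow_natCast q k, ← Real.rpow_add hq] at hsplit
  have h1q : 0 < 1 - q := by linarith
  have hP := (pochN_pos hq.le hq1 hqs k).ne'
  have hI := (pochInf_pos hq.le hq1 hqs).ne'
  have hIk := (pochInf_pos hq.le hq1 (Real.rpow_lt_one hq.le hq1 (by positivity : 0 < s + k))).ne'
  rw [qGamma, qGamma, ← hsplit, show 1 - (s + k) = 1 - s - k by ring,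
    Real.rpow_sub h1q, Real.rpow_natCast]
  field_simp

lemma poch_q_mul_pow (hq : 0 < q) (hq1 : q < 1) {μ : ℝ} (hμ : 0 < μ) (m : ℕ) :
    poch q (q * q ^ m) (μ - 1) =
      pochInf q q / pochInf q (q ^ μ) * (pochN q (q ^ μ) m / pochN q q m) := by
  have hqμ : q ^ μ < 1 := Real.rpow_lt_one hq.le hq1 hμ
  have hI := (pochInf_pos hq.le hq1 hq1).ne'
  have hIμ := (pochInf_pos hq.le hq1 hqμ).ne'
  have hP := (pochN_pos hq.le hq1 hq1 m).ne'
  have hPμ := (pochN_pos hq.le hq1 hqμ m).ne'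
  have hexp : q * q ^ m * q ^ (μ - 1) = q ^ μ * q ^ m := by
    rw [mul_right_comm, ← Real.rpow_one_add' hq.le (by linarith), add_sub_cancel]
  rw [poch, hexp, ← pochN_mul_pochInf hq.le hq1 q m, ← pochN_mul_pochInf hq.le hq1 (q ^ μ) m]
  field_simp

lemma hasSum_Ileft_rpow (hq : 0 < q) (hq1 : q < 1) {μ s x : ℝ} (hμ : 0 < μ) (hs : -1 < s)
    (hx : 0 < x) :
    HasSum (fun m : ℕ => q ^ m * (poch q (q * (x * q ^ m) / x) (μ - 1) * (x * q ^ m) ^ s))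
      (x ^ s * (pochInf q q / pochInf q (q ^ μ)) *
        (pochInf q (q ^ (μ + (s + 1))) / pochInf q (q ^ (s + 1)))) := by
  have hqs1 : |q ^ (s + 1)| < 1 := by
    rw [abs_of_pos (Real.rpow_pos_of_pos hq _)]
    exact Real.rpow_lt_one hq.le hq1 (by linarith)
  have h := (hasSum_qBinomial hq.le hq1 (Real.rpow_nonneg hq.le μ)
    (Real.rpow_lt_one hq.le hq1 hμ) hqs1).mul_left (x ^ s * (pochInf q q / pochInf q (q ^ μ)))
  rw [← Real.rpow_add hq] at h
  refine h.congr_fun fun m => ?_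
  rw [show q * (x * q ^ m) / x = q * q ^ m by field_simp, poch_q_mul_pow hq hq1 hμ m,
    Real.mul_rpow hx.le (pow_nonneg hq.le m), ← Real.rpow_pow_comm hq.le,
    Real.rpow_add hq, Real.rpow_one, mul_pow]
  ring

theorem Ileft_rpow (hq : 0 < q) (hq1 : q < 1) {μ s x : ℝ} (hμ : 0 < μ) (hs : -1 < s)
    (hx : 0 < x) :
    Ileft q μ (fun t => t ^ s) x = qGamma q (s + 1) / qGamma q (s + 1 + μ) * x ^ (s + μ) := by
  have h1q : 0 < 1 - q := by linarith
  have hI := (pochInf_pos hq.le hq1 hq1).ne'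
  have hIμ := (pochInf_pos hq.le hq1 (Real.rpow_lt_one hq.le hq1 hμ)).ne'
  have hIs := (pochInf_pos hq.le hq1 (Real.rpow_lt_one hq.le hq1 (by linarith : 0 < s + 1))).ne'
  have hIsμ := (pochInf_pos hq.le hq1
    (Real.rpow_lt_one hq.le hq1 (by linarith : 0 < s + 1 + μ))).ne'
  rw [Ileft, jackson, (hasSum_Ileft_rpow hq hq1 hμ hs hx).tsum_eq, qGamma, qGamma, qGamma,
    show μ + (s + 1) = s + 1 + μ by ring, show 1 - (s + 1) = -s by ring,
    show 1 - (s + 1 + μ) = -s + -μ by ring, Real.rpow_add h1q, Real.rpow_neg h1q.le,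
    Real.rpow_neg h1q.le, Real.rpow_sub h1q, Real.rpow_one, Real.rpow_add hx,
    Real.rpow_sub_one hx.ne']
  have := Real.rpow_pos_of_pos h1q μ
  have := Real.rpow_pos_of_pos h1q s
  have := Real.rpow_pos_of_pos hx μ
  field_simp

lemma Ileft_congr (hq : 0 < q) {μ x : ℝ} (hx : 0 < x) {f g : ℝ → ℝ}
    (h : ∀ t, 0 < t → f t = g t) : Ileft q μ f x = Ileft q μ g x := by
  simp only [Ileft, jackson]
  congr 3
  funext m
  rw [h _ (by positivity)]

lemma Ileft_const_mul (c μ x : ℝ) (f : ℝ → ℝ) :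
    Ileft q μ (fun t => c * f t) x = c * Ileft q μ f x := by
  simp only [Ileft, jackson, mul_left_comm _ c, tsum_mul_left]

lemma Ileft_finset_sum {ι : Type*} (s : Finset ι) (f : ι → ℝ → ℝ) {μ x : ℝ}
    (hf : ∀ i ∈ s, Summable fun m : ℕ =>
      q ^ m * (poch q (q * (x * q ^ m) / x) (μ - 1) * f i (x * q ^ m))) :
    Ileft q μ (fun t => ∑ i ∈ s, f i t) x = ∑ i ∈ s, Ileft q μ (f i) x := by
  simp only [Ileft, jackson, Finset.mul_sum, Summable.tsum_finsetSum hf]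

theorem Ileft_rpow_add_nat (hq : 0 < q) (hq1 : q < 1) {μ s x : ℝ} (hμ : 0 < μ) (hs : -1 < s)
    (hx : 0 < x) (k : ℕ) :
    Ileft q μ (fun t => t ^ (s + k)) x =
      qGamma q (s + 1) / qGamma q (s + μ + 1) *
        (pochN q (q ^ (s + 1)) k / pochN q (q ^ (s + μ + 1)) k) * x ^ (s + μ) * x ^ k := by
  have hsk : -1 < s + k := by have := k.cast_nonneg (α := ℝ); linarith
  rw [Ileft_rpow hq hq1 hμ hsk hx, show s + k + 1 = s + 1 + k by ring,
    show s + 1 + k + μ = s + μ + 1 + k by ring, show s + k + μ = s + μ + k by ring,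
    qGamma_add_nat hq hq1 (by linarith) k, qGamma_add_nat hq hq1 (by linarith) k,
    Real.rpow_add hx (s + μ), Real.rpow_natCast]
  have hP := (pochN_pos hq.le hq1 (Real.rpow_lt_one hq.le hq1 (by linarith : 0 < s + μ + 1)) k).ne'
  have hG := (qGamma_pos hq hq1 (by linarith : 0 < s + μ + 1)).ne'
  have h1q : (1 - q) ^ k ≠ 0 := pow_ne_zero _ (by linarith)
  field_simp

end QFrac

theorem stmt17_general (q α β μ : ℝ) (hq : 0 < q) (hq1 : q < 1)
    (hα : -1 < α) (hμ : 0 < μ) (n : ℕ) (x : ℝ)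
    (hx0 : 0 < x) :
    QFrac.Ileft q μ (fun t => t ^ α * QFrac.littleJacobi q n α β t) x =
      QFrac.qGamma q (α + 1) / QFrac.qGamma q (μ + α + 1) * x ^ (α + μ) *
        QFrac.littleJacobi q n (α + μ) (β - μ) x := by
  open QFrac in
  set c : ℕ → ℝ := fun k => pochN q (q ^ (-(n : ℝ))) k * pochN q (q ^ (α + β + n + 1)) k /
    (pochN q (q ^ (α + 1)) k * pochN q q k) * q ^ k
  have hexpand : ∀ t, 0 < t → t ^ α * littleJacobi q n α β t =
      ∑ k ∈ Finset.range (n + 1), c k * t ^ (α + k) := fun t ht => by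
    simp only [littleJacobi, Finset.mul_sum, Real.rpow_add ht, Real.rpow_natCast, mul_pow]
    exact Finset.sum_congr rfl fun k _ => by ring
  have hsummable (k : ℕ) := (hasSum_Ileft_rpow hq hq1 hμ
    (by linarith [k.cast_nonneg (α := ℝ)] : -1 < α + k) hx0).summable.mul_left (c k)
  rw [Ileft_congr hq hx0 hexpand,
    Ileft_finset_sum _ _ fun k _ => (hsummable k).congr fun m => by ring,
    littleJacobi, Finset.mul_sum, show α + μ + (β - μ) = α + β by ring]
  refine Finset.sum_congr rfl fun k _ => ?_
  rw [Ileft_const_mul, Ileft_rpow_add_nat hq hq1 hμ hα hx0, show μ + α + 1 = α + μ + 1 by ring]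
  have hP := (pochN_pos hq.le hq1 (Real.rpow_lt_one hq.le hq1 (by linarith : 0 < α + 1)) k).ne'
  simp only [c, mul_pow]
  field_simp

/-- left q-fractional integral of `t^α p_n(t;q^α,q^β|q)`. -/
theorem stmt17 (q α β μ : ℝ) (hq : 0 < q) (hq1 : q < 1)
    (hα : -1 < α) (hβ : -1 < β) (hμ : 0 < μ) (n : ℕ) (x : ℝ)
    (hx0 : 0 < x) (hx1 : x ≤ 1) :
    QFrac.Ileft q μ (fun t => t ^ α * QFrac.littleJacobi q n α β t) x =
      QFrac.qGamma q (α + 1) / QFrac.qGamma q (μ + α + 1) * x ^ (α + μ) *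
        QFrac.littleJacobi q n (α + μ) (β - μ) x :=
  stmt17_general q α β μ hq hq1 hα hμ n x hx0
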